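/- Let L₁ and L₂ be connected finite graphs, each with two distinguished vertices, say (a₁, a₂) in L₁ and (b₁, b₂) in L₂. Let L be the graph obtained by identifying a₁ with b₁ and a₂ with b₂ (disjoint union of edge sets, vertices identified pairwise). Then F₂(L) = F₂(L₁) · F₂(L₂), where F₂ denotes the number of spanning 2-forests separating the two distinguished vertices of each graph. -/

import Mathlib

structure Multigraph where
  V : Type
  E : Type
  [fintypeV : Fintype V]
  [fintypeE : Fintype E]
  [decEqV : DecidableEq V]
  ends : E → Sym2 V

attribute [instance] Multigraph.fintypeV Multigraph.fintypeE Multigraph.decEqV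

namespace Multigraph

variable (G : Multigraph)

/-- Reachability in the spanning subgraph using only the edges in `S`. -/
def Reach (S : Set G.E) : G.V → G.V → Prop :=
  Relation.ReflTransGen (fun x y => ∃ e ∈ S, G.ends e = s(x, y))

/-- The multigraph is connected. -/
def Connected : Prop := ∀ x y : G.V, G.Reach Set.univ x y

/-- The edge set `S` is acyclic: every edge of `S` is a bridge of `S`. -/
def IsForest (S : Finset G.E) : Prop :=
  ∀ e ∈ S, ∀ x y : G.V, G.ends e = s(x, y) → ¬ G.Reach ((↑S : Set G.E) \ {e}) x y

/-- `S` is the edge set of a spanning tree. -/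
def IsSpanningTree (S : Finset G.E) : Prop :=
  G.IsForest S ∧ ∀ x y : G.V, G.Reach ↑S x y

/-- `S` is the edge set of a spanning 2-forest consisting of two trees, one
containing `u`, the other containing `v`, whose vertex sets partition the vertices. -/
def IsTwoForest (u v : G.V) (S : Finset G.E) : Prop :=
  G.IsForest S ∧ ¬ G.Reach ↑S u v ∧ ∀ x : G.V, G.Reach ↑S u x ∨ G.Reach ↑S v x

/-- The number of spanning trees. -/
noncomputable def treeCount : ℕ :=
  Nat.card {S : Finset G.E // G.IsSpanningTree S}

/-- The number of spanning 2-forests separating `u` and `v`. -/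
noncomputable def twoForestCount (u v : G.V) : ℕ :=
  Nat.card {S : Finset G.E // G.IsTwoForest u v S}

end Multigraph

/-- The graph obtained by gluing `G` and `H` along the identifications `a₁ = b₁` and
`a₂ = b₂`: vertex sets are joined disjointly modulo the two identifications, edge sets
are joined disjointly (parallel edges may arise and are counted as distinct). -/
def glue2 (G H : Multigraph) (a₁ a₂ : G.V) (b₁ b₂ : H.V) : Multigraph where
  V := {x : G.V // x ≠ a₁ ∧ x ≠ a₂} ⊕ H.V
  E := G.E ⊕ H.E
  ends := fun e =>
    match e with
    | .inl e => (G.ends e).map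
        (fun x =>
          if h₁ : x = a₁ then Sum.inr b₁
          else if h₂ : x = a₂ then Sum.inr b₂
          else Sum.inl ⟨x, h₁, h₂⟩)
    | .inr e => (H.ends e).map Sum.inr

/-! An edge set `S` of the glued graph splits into `S₁ ⊆ E(L₁)` and `S₂ ⊆ E(L₂)`, and the
claim is that `S` is a 2-forest separating the glued vertices iff `S₁` and `S₂` are 2-forests
separating their distinguished pairs; the count then factors through
`Finset (E₁ ⊕ E₂) ≃ Finset E₁ × Finset E₂`.

Paths of `L₁` and `L₂` lift to the glued graph. Conversely, once the two glued vertices lie in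
different components of `S`, collapsing every vertex of the other side onto `a₁` or `a₂` (resp.
`b₁` or `b₂`) according to its component maps paths of the glued graph to paths of `L₁` (resp.
`L₂`), so reachability, bridges and spanning transfer in both directions. Separation itself
is detected by the colouring "reached from `a₁` within `S₁`, resp. from `b₁` within `S₂`",
which is constant along the edges of `S` as soon as neither side connects its pair. -/

namespace Multigraph

variable {G H : Multigraph} {S : Set G.E} {x y z : G.V}

theorem Reach.refl : G.Reach S x x := Relation.ReflTransGen.refl

theorem Reach.trans (h₁ : G.Reach S x y) (h₂ : G.Reach S y z) : G.Reach S x z :=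
  Relation.ReflTransGen.trans h₁ h₂

theorem Reach.symm (h : G.Reach S x y) : G.Reach S y x :=
  (@Relation.ReflTransGen.stdSymm _ _
    ⟨fun _ _ ⟨e, he, hends⟩ => ⟨e, he, hends.trans Sym2.eq_swap⟩⟩).symm _ _ h

theorem reach_of_ends_eq {e : G.E} (he : e ∈ S) (h : G.ends e = s(x, y)) : G.Reach S x y :=
  Relation.ReflTransGen.single ⟨e, he, h⟩

theorem Reach.reach_congr (h : G.Reach S x y) {p : G.V} : G.Reach S p x ↔ G.Reach S p y :=
  ⟨fun hp => hp.trans h, fun hp => hp.trans h.symm⟩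

theorem isDiag_map_reach (p : G.V) {e : G.E} (he : e ∈ S) :
    ((G.ends e).map (G.Reach S p)).IsDiag := by
  induction h : G.ends e using Sym2.ind with
  | _ u v => exact Sym2.mk_isDiag_iff.2 (propext (reach_of_ends_eq he h).reach_congr)

theorem Reach.map {T : Set H.E} (f : G.V → H.V)
    (hf : ∀ e ∈ S, ((G.ends e).map f).IsDiag ∨ ∃ e' ∈ T, H.ends e' = (G.ends e).map f)
    (h : G.Reach S x y) : H.Reach T (f x) (f y) := by
  induction h with
  | refl => exact .refl
  | tail _ hstep ih =>
    obtain ⟨e, he, hends⟩ := hstep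
    rcases hf e he with hdiag | ⟨e', he', hends'⟩
    · rw [hends, Sym2.map_mk, Sym2.mk_isDiag_iff] at hdiag
      rwa [← hdiag]
    · rw [hends, Sym2.map_mk] at hends'
      exact ih.trans (reach_of_ends_eq he' hends')

theorem Reach.eq_of_isDiag {α : Type*} (f : G.V → α) (hf : ∀ e ∈ S, ((G.ends e).map f).IsDiag)
    (h : G.Reach S x y) : f x = f y := by
  induction h with
  | refl => rfl
  | tail _ hstep ih =>
    obtain ⟨e, he, hends⟩ := hstep
    have := hf e he
    rw [hends, Sym2.map_mk, Sym2.mk_isDiag_iff] at this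
    exact ih.trans this

variable (G) in
def IsBridge (S : Set G.E) (e : G.E) : Prop :=
  ∀ x y : G.V, G.ends e = s(x, y) → ¬ G.Reach (S \ {e}) x y

theorem isForest_iff_forall_isBridge {S : Finset G.E} :
    G.IsForest S ↔ ∀ e ∈ S, G.IsBridge S e := Iff.rfl

theorem isBridge_iff_of_ends_eq {e : G.E} (h : G.ends e = s(x, y)) :
    G.IsBridge S e ↔ ¬ G.Reach (S \ {e}) x y := by
  refine ⟨fun hb => hb x y h, fun hxy u v huv => ?_⟩
  rcases Sym2.eq_iff.1 (h.symm.trans huv) with ⟨rfl, rfl⟩ | ⟨rfl, rfl⟩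
  exacts [hxy, fun h' => hxy h'.symm]

end Multigraph

theorem Finset.coe_toLeft {α β : Type*} (u : Finset (α ⊕ β)) :
    (u.toLeft : Set α) = Sum.inl ⁻¹' (u : Set (α ⊕ β)) := by
  ext; simp

theorem Finset.coe_toRight {α β : Type*} (u : Finset (α ⊕ β)) :
    (u.toRight : Set β) = Sum.inr ⁻¹' (u : Set (α ⊕ β)) := by
  ext; simp

namespace glue2

open Multigraph

variable (L₁ L₂ : Multigraph) (a₁ a₂ : L₁.V) (b₁ b₂ : L₂.V)

local notation "𝔾" => glue2 L₁ L₂ a₁ a₂ b₁ b₂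

def ofLeft (x : L₁.V) : (𝔾).V :=
  if h₁ : x = a₁ then .inr b₁ else if h₂ : x = a₂ then .inr b₂ else .inl ⟨x, h₁, h₂⟩

open Classical in
noncomputable def projLeft (S : Set (𝔾).E) : (𝔾).V → L₁.V :=
  Sum.elim Subtype.val fun y => if (𝔾).Reach S (.inr b₁) (.inr y) then a₁ else a₂

open Classical in
noncomputable def projRight (S : Set (𝔾).E) : (𝔾).V → L₂.V :=
  Sum.elim (fun x => if (𝔾).Reach S (.inr b₁) (.inl x) then b₁ else b₂) id

local notation "ι" => ofLeft L₁ L₂ a₁ a₂ b₁ b₂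
local notation "π₁" => projLeft L₁ L₂ a₁ a₂ b₁ b₂
local notation "π₂" => projRight L₁ L₂ a₁ a₂ b₁ b₂

variable {L₁ L₂ a₁ a₂ b₁ b₂}

theorem ends_inl (e : L₁.E) : (𝔾).ends (.inl e) = (L₁.ends e).map ι := rfl

theorem ends_inr (e : L₂.E) :
    (𝔾).ends (.inr e) = (L₂.ends e).map (Sum.inr : L₂.V → (𝔾).V) := rfl

theorem map_ends_inl {α : Type*} (f : (𝔾).V → α) (e : L₁.E) :
    ((𝔾).ends (.inl e)).map f = (L₁.ends e).map (f ∘ ι) :=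
  Sym2.map_map _

theorem map_ends_inr {α : Type*} (f : (𝔾).V → α) (e : L₂.E) :
    ((𝔾).ends (.inr e)).map f = (L₂.ends e).map (f ∘ .inr) :=
  Sym2.map_map _

theorem ofLeft_a₁ : ι a₁ = .inr b₁ := dif_pos rfl

theorem ofLeft_a₂ (ha : a₁ ≠ a₂) : ι a₂ = .inr b₂ :=
  (dif_neg ha.symm).trans (dif_pos rfl)

theorem ofLeft_of_ne {x : L₁.V} (h₁ : x ≠ a₁) (h₂ : x ≠ a₂) : ι x = .inl ⟨x, h₁, h₂⟩ :=
  (dif_neg h₁).trans (dif_neg h₂)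

theorem forall_iff {P : (𝔾).V → Prop} : (∀ w, P w) ↔ (∀ x, P (ι x)) ∧ ∀ y, P (.inr y) := by
  refine ⟨fun h => ⟨fun x => h _, fun y => h _⟩, fun ⟨hl, hr⟩ w => ?_⟩
  rcases w with ⟨x, hx₁, hx₂⟩ | y
  · simpa only [ofLeft_of_ne hx₁ hx₂] using hl x
  · exact hr y

theorem reach_ofLeft {T : Set (𝔾).E} {x y : L₁.V} (h : L₁.Reach (Sum.inl ⁻¹' T) x y) :
    (𝔾).Reach T (ι x) (ι y) :=
  h.map _ fun e he => .inr ⟨.inl e, he, rfl⟩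

theorem reach_inr {T : Set (𝔾).E} {x y : L₂.V} (h : L₂.Reach (Sum.inr ⁻¹' T) x y) :
    (𝔾).Reach T (.inr x) (.inr y) :=
  h.map _ fun e he => .inr ⟨.inr e, he, rfl⟩

theorem ofLeft_cases {P : L₁.V → (𝔾).V → Prop} (h₁ : P a₁ (.inr b₁))
    (h₂ : a₂ ≠ a₁ → P a₂ (.inr b₂))
    (h₃ : ∀ x (hx₁ : x ≠ a₁) (hx₂ : x ≠ a₂), P x (.inl ⟨x, hx₁, hx₂⟩)) (x : L₁.V) : P x (ι x) := by
  by_cases hx₁ : x = a₁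
  · subst hx₁
    rwa [ofLeft_a₁]
  by_cases hx₂ : x = a₂
  · subst hx₂
    rw [ofLeft_a₂ (Ne.symm hx₁)]
    exact h₂ hx₁
  · rw [ofLeft_of_ne hx₁ hx₂]
    exact h₃ x hx₁ hx₂

theorem projLeft_comp_ofLeft {S : Set (𝔾).E} (hsep : ¬ (𝔾).Reach S (.inr b₁) (.inr b₂)) :
    π₁ S ∘ ι = id :=
  funext <| ofLeft_cases (P := fun x w => π₁ S w = x) (if_pos .refl) (fun _ => if_neg hsep)
    fun _ _ _ => rfl

open Classical in
theorem projRight_comp_ofLeft {S : Set (𝔾).E} (hsep : ¬ (𝔾).Reach S (.inr b₁) (.inr b₂)) :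
    π₂ S ∘ ι = (fun P => if P then b₁ else b₂) ∘ (𝔾).Reach S (.inr b₁) ∘ ι :=
  funext <| ofLeft_cases (P := fun _ w => π₂ S w = if (𝔾).Reach S (.inr b₁) w then b₁ else b₂)
    (if_pos .refl).symm (fun _ => (if_neg hsep).symm) fun _ _ _ => rfl

open Classical in
theorem reach_projLeft {S T : Set (𝔾).E} (hsep : ¬ (𝔾).Reach S (.inr b₁) (.inr b₂))
    (hT : T ⊆ S) {p q : (𝔾).V} (h : (𝔾).Reach T p q) :
    L₁.Reach (Sum.inl ⁻¹' T) (π₁ S p) (π₁ S q) := by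
  refine h.map _ fun e he => ?_
  rcases e with e | e
  · refine .inr ⟨e, he, ?_⟩
    rw [map_ends_inl, projLeft_comp_ofLeft hsep, Sym2.map_id, id]
  · left
    have hd := (isDiag_map_reach (Sum.inr b₁ : (𝔾).V) (hT he)).map
      (f := fun P => if P then a₁ else a₂)
    rw [map_ends_inr, Sym2.map_map] at hd
    rw [map_ends_inr]
    exact hd

open Classical in
theorem reach_projRight {S T : Set (𝔾).E} (hsep : ¬ (𝔾).Reach S (.inr b₁) (.inr b₂))
    (hT : T ⊆ S) {p q : (𝔾).V} (h : (𝔾).Reach T p q) :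
    L₂.Reach (Sum.inr ⁻¹' T) (π₂ S p) (π₂ S q) := by
  refine h.map _ fun e he => ?_
  rcases e with e | e
  · left
    have hd := (isDiag_map_reach (Sum.inr b₁ : (𝔾).V) (hT he)).map
      (f := fun P => if P then b₁ else b₂)
    rwa [map_ends_inl, Sym2.map_map, ← projRight_comp_ofLeft hsep, ← map_ends_inl] at hd
  · refine .inr ⟨e, he, ?_⟩
    rw [map_ends_inr]
    exact (congrFun Sym2.map_id _).symm

theorem reach_ofLeft_iff {S T : Set (𝔾).E} (hsep : ¬ (𝔾).Reach S (.inr b₁) (.inr b₂))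
    (hT : T ⊆ S) {x y : L₁.V} : (𝔾).Reach T (ι x) (ι y) ↔ L₁.Reach (Sum.inl ⁻¹' T) x y := by
  refine ⟨fun h => ?_, reach_ofLeft⟩
  simpa only [← Function.comp_apply (f := π₁ S), projLeft_comp_ofLeft hsep, id]
    using reach_projLeft hsep hT h

theorem reach_inr_iff {S T : Set (𝔾).E} (hsep : ¬ (𝔾).Reach S (.inr b₁) (.inr b₂))
    (hT : T ⊆ S) {x y : L₂.V} : (𝔾).Reach T (.inr x) (.inr y) ↔ L₂.Reach (Sum.inr ⁻¹' T) x y :=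
  ⟨reach_projRight hsep hT, reach_inr⟩

theorem reach_inr_inr_iff (ha : a₁ ≠ a₂) (T : Set (𝔾).E) :
    (𝔾).Reach T (.inr b₁) (.inr b₂) ↔
      L₁.Reach (Sum.inl ⁻¹' T) a₁ a₂ ∨ L₂.Reach (Sum.inr ⁻¹' T) b₁ b₂ := by
  refine ⟨fun h => ?_, ?_⟩
  · by_contra! hsep
    obtain ⟨h₁, h₂⟩ := hsep
    let c : (𝔾).V → Prop :=
      Sum.elim (fun x => L₁.Reach (Sum.inl ⁻¹' T) a₁ x.1) (L₂.Reach (Sum.inr ⁻¹' T) b₁)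
    have hc : c ∘ ι = L₁.Reach (Sum.inl ⁻¹' T) a₁ :=
      funext <| ofLeft_cases (P := fun x w => c w = L₁.Reach _ a₁ x)
        (propext (iff_of_true .refl .refl)) (fun _ => propext (iff_of_false h₂ h₁))
        fun _ _ _ => rfl
    have hb : c (.inr b₁) = c (.inr b₂) := h.eq_of_isDiag c fun e he => by
      rcases e with e | e
      · rw [map_ends_inl, hc]
        exact isDiag_map_reach a₁ he
      · rw [map_ends_inr]
        exact isDiag_map_reach b₁ he
    exact h₂ (cast hb .refl)
  · rintro (h | h)
    · simpa only [ofLeft_a₁, ofLeft_a₂ ha] using reach_ofLeft h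
    · exact reach_inr h

theorem preimage_inl_sdiff_singleton (S : Set (𝔾).E) (e : L₁.E) :
    Sum.inl ⁻¹' (S \ {.inl e}) = Sum.inl ⁻¹' S \ {e} :=
  Set.ext fun _ => and_congr_right' (not_congr Sum.inl_injective.eq_iff)

theorem preimage_inr_sdiff_singleton (S : Set (𝔾).E) (e : L₂.E) :
    Sum.inr ⁻¹' (S \ {.inr e}) = Sum.inr ⁻¹' S \ {e} :=
  Set.ext fun _ => and_congr_right' (not_congr Sum.inr_injective.eq_iff)

theorem isBridge_inl_iff {S : Set (𝔾).E} (hsep : ¬ (𝔾).Reach S (.inr b₁) (.inr b₂))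
    (e : L₁.E) : (𝔾).IsBridge S (.inl e) ↔ L₁.IsBridge (Sum.inl ⁻¹' S) e := by
  induction h : L₁.ends e using Sym2.ind with
  | _ u v =>
    have hends : (𝔾).ends (.inl e) = s(ι u, ι v) := by rw [ends_inl, h, Sym2.map_mk]
    refine (isBridge_iff_of_ends_eq hends).trans ?_
    rw [isBridge_iff_of_ends_eq h, ← preimage_inl_sdiff_singleton]
    exact (reach_ofLeft_iff hsep Set.sdiff_subset).not

theorem isBridge_inr_iff {S : Set (𝔾).E} (hsep : ¬ (𝔾).Reach S (.inr b₁) (.inr b₂))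
    (e : L₂.E) : (𝔾).IsBridge S (.inr e) ↔ L₂.IsBridge (Sum.inr ⁻¹' S) e := by
  induction h : L₂.ends e using Sym2.ind with
  | _ u v =>
    have hends : (𝔾).ends (.inr e) = s(.inr u, .inr v) := by rw [ends_inr, h, Sym2.map_mk]; rfl
    refine (isBridge_iff_of_ends_eq hends).trans ?_
    rw [isBridge_iff_of_ends_eq h, ← preimage_inr_sdiff_singleton]
    exact (reach_inr_iff hsep Set.sdiff_subset).not

theorem isForest_iff {S : Finset (𝔾).E} (hsep : ¬ (𝔾).Reach S (.inr b₁) (.inr b₂)) :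
    (𝔾).IsForest S ↔ L₁.IsForest S.toLeft ∧ L₂.IsForest S.toRight := by
  rw [isForest_iff_forall_isBridge]
  change (∀ e : L₁.E ⊕ L₂.E, _) ↔ _
  simp only [Sum.forall, isForest_iff_forall_isBridge, Finset.mem_toLeft (u := S),
    Finset.mem_toRight (u := S), Finset.coe_toLeft S, Finset.coe_toRight S, isBridge_inl_iff hsep,
    isBridge_inr_iff hsep]
  exact Iff.rfl

theorem forall_reach_or_reach_iff (ha : a₁ ≠ a₂) {S : Set (𝔾).E}
    (hsep : ¬ (𝔾).Reach S (.inr b₁) (.inr b₂)) :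
    (∀ w, (𝔾).Reach S (.inr b₁) w ∨ (𝔾).Reach S (.inr b₂) w) ↔
      (∀ x, L₁.Reach (Sum.inl ⁻¹' S) a₁ x ∨ L₁.Reach (Sum.inl ⁻¹' S) a₂ x) ∧
        ∀ y, L₂.Reach (Sum.inr ⁻¹' S) b₁ y ∨ L₂.Reach (Sum.inr ⁻¹' S) b₂ y := by
  rw [forall_iff]
  refine and_congr (forall_congr' fun x => ?_) (forall_congr' fun y => ?_)
  · rw [← ofLeft_a₁, ← ofLeft_a₂ ha, reach_ofLeft_iff hsep subset_rfl,
      reach_ofLeft_iff hsep subset_rfl]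
  · rw [reach_inr_iff hsep subset_rfl, reach_inr_iff hsep subset_rfl]

theorem isTwoForest_iff (ha : a₁ ≠ a₂) (S : Finset (𝔾).E) :
    (𝔾).IsTwoForest (.inr b₁) (.inr b₂) S ↔
      L₁.IsTwoForest a₁ a₂ S.toLeft ∧ L₂.IsTwoForest b₁ b₂ S.toRight := by
  by_cases hsep : (𝔾).Reach S (.inr b₁) (.inr b₂)
  · have := (reach_inr_inr_iff ha _).1 hsep
    simp only [IsTwoForest, Finset.coe_toLeft S, Finset.coe_toRight S]
    tauto
  simp only [IsTwoForest, isForest_iff hsep, reach_inr_inr_iff ha,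
    Finset.coe_toLeft S, forall_reach_or_reach_iff ha hsep,
    Finset.coe_toRight S]
  tauto

end glue2

theorem stmt_10_general (L₁ L₂ : Multigraph) (a₁ a₂ : L₁.V) (b₁ b₂ : L₂.V)
    (ha : a₁ ≠ a₂) :
    (glue2 L₁ L₂ a₁ a₂ b₁ b₂).twoForestCount (Sum.inr b₁) (Sum.inr b₂) =
      L₁.twoForestCount a₁ a₂ * L₂.twoForestCount b₁ b₂ := by
  unfold Multigraph.twoForestCount
  rw [← Nat.card_prod]
  have hsplit := glue2.isTwoForest_iff (L₂ := L₂) (b₁ := b₁) (b₂ := b₂) ha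
  exact Nat.card_congr <|
    (Finset.sumEquiv.toEquiv.subtypeEquiv fun S => hsplit S).trans Equiv.subtypeProdEquivProd

/-- If `L₁`, `L₂` are connected finite graphs with distinguished vertices `(a₁, a₂)` and
`(b₁, b₂)` respectively, and `L` is obtained by identifying `a₁` with `b₁` and `a₂` with
`b₂`, then `F₂(L) = F₂(L₁) · F₂(L₂)` for the numbers of spanning 2-forests separating
the distinguished pairs. -/
theorem stmt_10 (L₁ L₂ : Multigraph) (a₁ a₂ : L₁.V) (b₁ b₂ : L₂.V)
    (ha : a₁ ≠ a₂) (hb : b₁ ≠ b₂) (h₁ : L₁.Connected) (h₂ : L₂.Connected) :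
    (glue2 L₁ L₂ a₁ a₂ b₁ b₂).twoForestCount (Sum.inr b₁) (Sum.inr b₂) =
      L₁.twoForestCount a₁ a₂ * L₂.twoForestCount b₁ b₂ :=
  stmt_10_general L₁ L₂ a₁ a₂ b₁ b₂ ha
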